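/- For all j ≥ 0 and k ≥ 1, the functions F_k^j and L_k^j form a Galois connection on ℕ: for all m, n ≥ 0, F_k^j(n) ≤ m if and only if n ≤ L_k^j(m). Moreover this is a Galois insertion: F_k^j(L_k^j(m)) = m for all m ≥ 0. -/

import Mathlib

/-! Since τ_k(x_k[0:n)) = x_k[0:L_k(n)), the word x_k is cut into the blocks τ_k(x_k[t]),
starting at the positions L_k(t). As L_k is strictly increasing, its lower adjoint is
G(n) = #{t | L_k(t) < n}, and G^j, the lower adjoint of L_k^j, counts the points of
range L_k^j below n. A letter satisfies x_k[t] > j iff t ∈ range L_k^j (for j < k), so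
range L_k^k is the set of starts of the blocks k1, and n + 1 is a block start iff
n ∉ range L_k^k. Counting yields G(n + 1) + G^k(n) = n + 1, the recursion defining F_k;
hence F_k = G. -/

/-- The substitution τ_k, applied to a single letter: τ_k(k) = k1 and τ_k(i) = i+1 for i ≠ k. -/
def tauLetter (k i : ℕ) : List ℕ := if i = k then [k, 1] else [i + 1]

/-- The substitution τ_k, extended to finite words (lists of letters) by concatenation. -/
def tauWord (k : ℕ) (w : List ℕ) : List ℕ := w.flatMap (tauLetter k)

/-- The infinite fixed point x_k of τ_k (starting with the letter k): its n-th letter is the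
n-th letter of any sufficiently long iterate τ_k^j(k), here j = n+1. -/
def xk (k n : ℕ) : ℕ := ((tauWord k)^[n + 1] [k]).getD n 0

/-- L_k(n) = |τ_k(x_k[0:n))|, the length of the τ_k-image of the prefix of x_k of length n. -/
def Lk (k n : ℕ) : ℕ := (tauWord k ((List.range n).map (xk k))).length

/-- C_k^{(=i)}(n): the number of occurrences of the letter i among x_k[0],...,x_k[n-1]. -/
def Ceq (k i n : ℕ) : ℕ := ((Finset.range n).filter (fun m => xk k m = i)).card

/-- C_k^{(>j)}(n): the number of positions m < n with x_k[m] > j. -/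
def Cgt (k j n : ℕ) : ℕ := ((Finset.range n).filter (fun m => j < xk k m)).card

open Function Set

def NestedRec (k : ℕ) (F : ℕ → ℕ) : Prop :=
  F 0 = 0 ∧ ∀ n, 1 ≤ n → F n = n - F^[k] (n - 1)

theorem NestedRec.le_id {k : ℕ} {F : ℕ → ℕ} (hF : NestedRec k F) : F ≤ id := by
  rintro (_ | n)
  · simp [hF.1]
  · simp [hF.2 (n + 1) (by omega)]

theorem NestedRec.unique {k : ℕ} {F G : ℕ → ℕ} (hF : NestedRec k F) (hG : NestedRec k G) :
    F = G := by
  funext n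
  induction n using Nat.strong_induction_on with
  | _ n ih =>
    rcases n with _ | n
    · rw [hF.1, hG.1]
    have h_iterate : ∀ i, F^[i] n = G^[i] n := by
      intro i
      induction i with
      | zero => rfl
      | succ i ih_i =>
        rw [iterate_succ_apply', iterate_succ_apply', ih_i]
        exact ih _ (Nat.lt_succ_of_le (iterate_le_id_of_le_id hG.le_id i n))
    rw [hF.2 (n + 1) (by omega), hG.2 (n + 1) (by omega), Nat.add_sub_cancel, h_iterate]

section CountRange

open scoped Classical

variable {u : ℕ → ℕ}

theorem StrictMono.nth_range_eq (hu : StrictMono u) : Nat.nth (· ∈ range u) = u := by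
  have hinf : (Set.ofPred (· ∈ range u)).Infinite := Set.infinite_range_of_injective hu.injective
  funext n
  symm
  refine Nat.eq_nth_of_strictMonoOn_of_mapsTo_of_surjOn u ?_ ?_ (hu.strictMonoOn _)
    (fun hf => absurd hf hinf)
  · rintro _ ⟨m, rfl⟩
    exact ⟨m, fun hf => absurd hf hinf, rfl⟩
  · intro m _
    exact ⟨m, rfl⟩

theorem StrictMono.gc_count_range (hu : StrictMono u) :
    GaloisConnection (Nat.count (· ∈ range u)) u := by
  have := Nat.gc_count_nth (p := (· ∈ range u)) (Set.infinite_range_of_injective hu.injective)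
  rwa [hu.nth_range_eq] at this

theorem StrictMono.count_range_apply (hu : StrictMono u) (m : ℕ) :
    Nat.count (· ∈ range u) (u m) = m := by
  have := Nat.count_nth_of_infinite (p := (· ∈ range u))
    (Set.infinite_range_of_injective hu.injective) m
  rwa [hu.nth_range_eq] at this

theorem StrictMono.iterate_count_range (hu : StrictMono u) (j : ℕ) :
    (Nat.count (· ∈ range u))^[j] = Nat.count (· ∈ range u^[j]) := by
  induction j with
  | zero =>
    funext n
    simp [Nat.count_eq_card_filter_range]
  | succ j ih =>
    funext n
    have gc := hu.gc_count_range.compose (hu.iterate j).gc_count_range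
    rw [← ih, ← iterate_succ, ← iterate_succ'] at gc
    exact gc.l_unique (hu.iterate (j + 1)).gc_count_range (fun _ => rfl)

end CountRange

theorem tauWord_append (k : ℕ) (a b : List ℕ) :
    tauWord k (a ++ b) = tauWord k a ++ tauWord k b :=
  List.flatMap_append ..

theorem tauWord_singleton (k a : ℕ) : tauWord k [a] = tauLetter k a := by
  simp [tauWord]

theorem List.IsPrefix.tauWord (k : ℕ) {a b : List ℕ} (h : a <+: b) :
    tauWord k a <+: tauWord k b := by
  obtain ⟨c, rfl⟩ := h
  rw [tauWord_append]
  exact List.prefix_append _ _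

theorem length_tauLetter_pos (k i : ℕ) : 0 < (tauLetter k i).length := by
  unfold tauLetter; split <;> simp

theorem length_le_length_tauWord (k : ℕ) (w : List ℕ) : w.length ≤ (tauWord k w).length := by
  induction w with
  | nil => simp
  | cons a w ih =>
    rw [← List.singleton_append, tauWord_append, tauWord_singleton, List.length_append,
      List.length_append]
    have := length_tauLetter_pos k a
    simp only [List.length_singleton]
    omega

theorem tauWord_iterate_prefix_succ (k j : ℕ) :
    (tauWord k)^[j] [k] <+: (tauWord k)^[j + 1] [k] := by
  induction j with
  | zero => exact ⟨[1], by simp [tauWord, tauLetter]⟩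
  | succ j ih =>
    rw [iterate_succ_apply' _ j, iterate_succ_apply' _ (j + 1)]
    exact ih.tauWord k

theorem tauWord_iterate_prefix (k : ℕ) {i j : ℕ} (h : i ≤ j) :
    (tauWord k)^[i] [k] <+: (tauWord k)^[j] [k] :=
  Nat.rel_of_forall_rel_succ_of_le (· <+: ·) (tauWord_iterate_prefix_succ k) h

theorem lt_length_tauWord_iterate (k j : ℕ) : j < ((tauWord k)^[j] [k]).length := by
  induction j with
  | zero => simp
  | succ j ih =>
    obtain ⟨t, ht⟩ : [k] <+: (tauWord k)^[j] [k] := tauWord_iterate_prefix k (Nat.zero_le j)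
    rw [iterate_succ_apply', ← ht, tauWord_append, tauWord_singleton, tauLetter, if_pos rfl]
    rw [← ht] at ih
    have := length_le_length_tauWord k t
    simp only [List.length_append, List.length_cons, List.length_nil] at ih ⊢
    omega

theorem xk_eq_getElem (k : ℕ) {j n : ℕ} (h : n < ((tauWord k)^[j] [k]).length) :
    xk k n = ((tauWord k)^[j] [k])[n] := by
  have hn : n < ((tauWord k)^[n + 1] [k]).length :=
    (lt_length_tauWord_iterate k (n + 1)).trans' (by omega)
  rw [xk, List.getD_eq_getElem _ _ hn]
  rcases Nat.le_total (n + 1) j with h' | h'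
  · exact (tauWord_iterate_prefix k h').getElem hn
  · exact ((tauWord_iterate_prefix k h').getElem h).symm

def xkPrefix (k n : ℕ) : List ℕ := (List.range n).map (xk k)

@[simp] theorem length_xkPrefix (k n : ℕ) : (xkPrefix k n).length = n := by simp [xkPrefix]

theorem getElem_xkPrefix (k : ℕ) {n i : ℕ} (h : i < (xkPrefix k n).length) :
    (xkPrefix k n)[i] = xk k i := by
  simp [xkPrefix]

theorem xkPrefix_succ (k n : ℕ) : xkPrefix k (n + 1) = xkPrefix k n ++ [xk k n] := by
  simp [xkPrefix, List.range_succ]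

theorem Lk_eq_length (k n : ℕ) : Lk k n = (tauWord k (xkPrefix k n)).length := rfl

theorem xkPrefix_eq_take (k : ℕ) {j n : ℕ} (h : n ≤ ((tauWord k)^[j] [k]).length) :
    xkPrefix k n = ((tauWord k)^[j] [k]).take n := by
  refine List.ext_getElem (by simpa using h) fun i h₁ h₂ => ?_
  rw [getElem_xkPrefix, List.getElem_take]
  exact xk_eq_getElem k (by simp at h₁; omega)

theorem xkPrefix_Lk (k n : ℕ) : xkPrefix k (Lk k n) = tauWord k (xkPrefix k n) := by
  have hpre : tauWord k (xkPrefix k n) <+: (tauWord k)^[n + 1] [k] := by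
    rw [iterate_succ_apply', xkPrefix_eq_take k (lt_length_tauWord_iterate k n).le]
    exact (List.take_prefix n _).tauWord k
  rw [Lk_eq_length, xkPrefix_eq_take k hpre.length_le, ← List.prefix_iff_eq_take.mp hpre]

theorem Lk_succ (k n : ℕ) : Lk k (n + 1) = Lk k n + (tauLetter k (xk k n)).length := by
  rw [Lk_eq_length, Lk_eq_length, xkPrefix_succ, tauWord_append, tauWord_singleton,
    List.length_append]

theorem Lk_strictMono (k : ℕ) : StrictMono (Lk k) :=
  strictMono_nat_of_lt_succ fun n => by
    rw [Lk_succ]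
    exact Nat.lt_add_of_pos_right (length_tauLetter_pos k _)

theorem xk_Lk_add (k m : ℕ) {i : ℕ} (hi : i < (tauLetter k (xk k m)).length) :
    xk k (Lk k m + i) = (tauLetter k (xk k m))[i] := by
  have hblock : xkPrefix k (Lk k (m + 1)) = xkPrefix k (Lk k m) ++ tauLetter k (xk k m) := by
    rw [xkPrefix_Lk, xkPrefix_Lk, xkPrefix_succ, tauWord_append, tauWord_singleton]
  have hlt : Lk k m + i < (xkPrefix k (Lk k (m + 1))).length := by
    rw [length_xkPrefix, Lk_succ]; omega
  rw [← getElem_xkPrefix k hlt]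
  simp [hblock, List.getElem_append_right]

theorem xk_Lk (k m : ℕ) : xk k (Lk k m) = if xk k m = k then k else xk k m + 1 := by
  rw [← Nat.add_zero (Lk k m), xk_Lk_add k m (length_tauLetter_pos k _)]
  unfold tauLetter
  split <;> rfl

theorem xk_Lk_add_one {k m : ℕ} (hx : xk k m = k) : xk k (Lk k m + 1) = 1 := by
  rw [xk_Lk_add k m (by simp [tauLetter, hx])]
  simp [tauLetter, hx]

theorem Lk_succ_of_xk_eq {k m : ℕ} (hx : xk k m = k) : Lk k (m + 1) = Lk k m + 2 := by
  simp [Lk_succ, tauLetter, hx]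

theorem Lk_succ_of_xk_ne {k m : ℕ} (hx : xk k m ≠ k) : Lk k (m + 1) = Lk k m + 1 := by
  simp [Lk_succ, tauLetter, hx]

theorem xk_mem_Icc {k : ℕ} (hk : 1 ≤ k) (n : ℕ) : xk k n ∈ Icc 1 k := by
  have hletters : ∀ j, ∀ a ∈ (tauWord k)^[j] [k], a ∈ Icc 1 k := by
    intro j
    induction j with
    | zero => simpa using hk
    | succ j ih =>
      simp only [iterate_succ_apply', tauWord, List.mem_flatMap, tauLetter]
      rintro a ⟨i, hi, hai⟩
      have := ih i hi
      simp only [mem_Icc] at this ⊢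
      split at hai <;> simp at hai <;> omega
  have hn := lt_length_tauWord_iterate k (n + 1)
  rw [xk_eq_getElem k (by omega : n < ((tauWord k)^[n + 1] [k]).length)]
  exact hletters _ _ (List.getElem_mem _)

theorem mem_range_Lk_or (k m : ℕ) :
    m ∈ range (Lk k) ∨ ∃ t, xk k t = k ∧ m = Lk k t + 1 := by
  induction m with
  | zero => exact Or.inl ⟨0, rfl⟩
  | succ m ih =>
    rcases ih with ⟨t, rfl⟩ | ⟨t, hx, rfl⟩
    · by_cases hx : xk k t = k
      · exact Or.inr ⟨t, hx, rfl⟩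
      · exact Or.inl ⟨t + 1, Lk_succ_of_xk_ne hx⟩
    · exact Or.inl ⟨t + 1, Lk_succ_of_xk_eq hx⟩

theorem notMem_range_Lk_iff {k m : ℕ} :
    m ∉ range (Lk k) ↔ ∃ t, xk k t = k ∧ m = Lk k t + 1 := by
  refine ⟨(mem_range_Lk_or k m).resolve_left, ?_⟩
  rintro ⟨t, hx, rfl⟩ ⟨s, hs⟩
  have h₁ : t < s := (Lk_strictMono k).lt_iff_lt.mp (by omega)
  have h₂ : s < t + 1 := (Lk_strictMono k).lt_iff_lt.mp (by rw [Lk_succ_of_xk_eq hx]; omega)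
  omega

theorem mem_range_Lk_iterate_iff {k j : ℕ} (hk : 1 ≤ k) (hj : j < k) (t : ℕ) :
    t ∈ range (Lk k)^[j] ↔ j + 1 ≤ xk k t := by
  induction j generalizing t with
  | zero => simpa using (xk_mem_Icc hk t).1
  | succ j ih =>
    rw [iterate_succ', range_comp]
    constructor
    · rintro ⟨s, hs, rfl⟩
      have := (ih (by omega) s).mp hs
      rw [xk_Lk]
      split <;> omega
    · intro ht
      obtain ⟨s, rfl⟩ | ⟨s, hx, rfl⟩ := mem_range_Lk_or k t
      · refine ⟨s, (ih (by omega) s).mpr ?_, rfl⟩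
        rw [xk_Lk] at ht
        split at ht <;> omega
      · rw [xk_Lk_add_one hx] at ht
        omega

theorem range_Lk_iterate_self {k : ℕ} (hk : 1 ≤ k) :
    range (Lk k)^[k] = Lk k '' {t | xk k t = k} := by
  obtain ⟨k', rfl⟩ : ∃ k', k = k' + 1 := ⟨k - 1, by omega⟩
  rw [iterate_succ', range_comp]
  congr 1
  ext t
  have := mem_Icc.mp (xk_mem_Icc hk t)
  rw [mem_range_Lk_iterate_iff hk (by omega), mem_ofPred_eq]
  omega

theorem succ_mem_range_Lk_iff {k : ℕ} (hk : 1 ≤ k) (n : ℕ) :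
    n + 1 ∈ range (Lk k) ↔ n ∉ range (Lk k)^[k] := by
  rw [← not_iff_not, not_not, notMem_range_Lk_iff, range_Lk_iterate_self hk]
  simp [eq_comm]

open scoped Classical in
theorem nestedRec_count_range_Lk {k : ℕ} (hk : 1 ≤ k) :
    NestedRec k (Nat.count (· ∈ range (Lk k))) := by
  refine ⟨Nat.count_zero _, fun n hn => ?_⟩
  rw [(Lk_strictMono k).iterate_count_range k]
  obtain ⟨n, rfl⟩ : ∃ m, n = m + 1 := ⟨n - 1, by omega⟩
  suffices
      Nat.count (· ∈ range (Lk k)) (n + 1) + Nat.count (· ∈ range (Lk k)^[k]) n = n + 1 by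
    rw [Nat.add_sub_cancel]
    omega
  clear hn
  induction n with
  | zero => simpa [Nat.count_succ] using ⟨0, rfl⟩
  | succ n ih =>
    rw [Nat.count_succ (· ∈ range (Lk k)) (n + 1), Nat.count_succ (· ∈ range (Lk k)^[k]) n]
    by_cases h : n ∈ range (Lk k)^[k]
    · rw [if_neg ((succ_mem_range_Lk_iff hk n).not.mpr (not_not.mpr h)), if_pos h]
      omega
    · rw [if_pos ((succ_mem_range_Lk_iff hk n).mpr h), if_neg h]
      omega

/-- F_k^j and L_k^j form a Galois connection on ℕ, and even a Galois insertion: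
F_k^j ∘ L_k^j = id. -/
theorem stmt4 (k j : ℕ) (hk : 1 ≤ k) (F : ℕ → ℕ)
    (hF0 : F 0 = 0) (hF : ∀ n, 1 ≤ n → F n = n - F^[k] (n - 1)) :
    (∀ m n : ℕ, F^[j] n ≤ m ↔ n ≤ (Lk k)^[j] m) ∧
    (∀ m : ℕ, F^[j] ((Lk k)^[j] m) = m) := by
  classical
  have hF_eq : F = Nat.count (· ∈ range (Lk k)) :=
    NestedRec.unique ⟨hF0, hF⟩ (nestedRec_count_range_Lk hk)
  have hLj := (Lk_strictMono k).iterate j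
  rw [hF_eq, (Lk_strictMono k).iterate_count_range j]
  exact ⟨fun m n => hLj.gc_count_range n m, hLj.count_range_apply⟩
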